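/- Let w ∈ A₂^d and let {λ_I}_{I∈D} be a sequence of nonnegative numbers that is Carleson with constant Q, i.e. (1/|J|) Σ_{I∈D(J)} λ_I ≤ Q for every J ∈ D. Then for every J ∈ D, (1/|J|) Σ_{I∈D(J)} (m_I w) λ_I ≤ 4 Q · ‖w‖_{A₂^d} · m_J w. -/

import Mathlib

open MeasureTheory Set

noncomputable section

/-- The dyadic interval `[k 2^{-j}, (k+1) 2^{-j})`, indexed by `I = (j, k)`. -/
def dyadicI (I : ℤ × ℤ) : Set ℝ :=
  Set.Ico ((I.2 : ℝ) * 2 ^ (-I.1)) (((I.2 : ℝ) + 1) * 2 ^ (-I.1))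

/-- The length `|I| = 2^{-j}` of the dyadic interval indexed by `I = (j, k)`. -/
def len (I : ℤ × ℤ) : ℝ := 2 ^ (-I.1)

/-- The left half `I⁺` of the dyadic interval `I`. -/
def leftHalf (I : ℤ × ℤ) : ℤ × ℤ := (I.1 + 1, 2 * I.2)

/-- The right half `I⁻` of the dyadic interval `I`. -/
def rightHalf (I : ℤ × ℤ) : ℤ × ℤ := (I.1 + 1, 2 * I.2 + 1)

/-- The average `m_I f = (1/|I|) ∫_I f`. -/
def avg (f : ℝ → ℝ) (I : ℤ × ℤ) : ℝ := (len I)⁻¹ * ∫ x in dyadicI I, f x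

/-- The Haar function `h_I = |I|^{-1/2} (χ_{I⁺} - χ_{I⁻})`. -/
def haar (I : ℤ × ℤ) (x : ℝ) : ℝ :=
  (Real.sqrt (len I))⁻¹ *
    ((dyadicI (leftHalf I)).indicator (fun _ => (1 : ℝ)) x -
      (dyadicI (rightHalf I)).indicator (fun _ => (1 : ℝ)) x)

/-- The Haar coefficient `b_I = ⟨b, h_I⟩`. -/
def haarCoef (b : ℝ → ℝ) (I : ℤ × ℤ) : ℝ := ∫ x, b x * haar I x

/-- The dyadic BMO norm of `b`. -/
def bmoNorm (b : ℝ → ℝ) : ℝ :=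
  Real.sqrt (⨆ I : ℤ × ℤ, (len I)⁻¹ * ∫ x in dyadicI I, (b x - avg b I) ^ 2)

/-- The `A₂^d` characteristic `‖w‖_{A₂^d} = sup_I (m_I w)(m_I w⁻¹)`. -/
def A2const (w : ℝ → ℝ) : ℝ :=
  ⨆ I : ℤ × ℤ, avg w I * avg (fun x => (w x)⁻¹) I

/-! The weight enters only through `m_I w ≤ ‖w‖_{A₂^d} (m_I √w)²`, which follows from two
Cauchy–Schwarz inequalities: `1 ≤ m_I(√w) m_I(1/√w)` and `(m_I (1/√w))² ≤ m_I (1/w)`.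
The theorem is then the Carleson embedding theorem
`|J|⁻¹ Σ_{I ∈ D(J)} λ_I (m_I f)² ≤ 4 Q m_J (f²)` applied to `f = √w`. That theorem is proved
by induction over the dyadic tree with the Bellman function
`B(F, x, M) = 4Q (F - Q x² / (Q + M))`: it dominates the normalised partial sums, is at most
`4QF`, and its main inequality (Engel's form of Cauchy–Schwarz plus the constraint `M ≤ Q`)
is exactly what the passage from the two halves of an interval to the interval requires. -/

section Averages

variable {α : Type*} [MeasurableSpace α] {μ : Measure α}

theorem sq_integral_mul_le_integral_sq_mul_integral_sq {f g : α → ℝ} (hf : MemLp f 2 μ)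
    (hg : MemLp g 2 μ) :
    (∫ x, f x * g x ∂μ) ^ 2 ≤ (∫ x, f x ^ 2 ∂μ) * ∫ x, g x ^ 2 ∂μ := by
  have inner_eq : ∀ {u v : α → ℝ} (hu : MemLp u 2 μ) (hv : MemLp v 2 μ),
      inner ℝ (hu.toLp u) (hv.toLp v) = ∫ x, u x * v x ∂μ := fun hu hv => by
    rw [L2.inner_def]
    refine integral_congr_ae ?_
    filter_upwards [hu.coeFn_toLp, hv.coeFn_toLp] with x hux hvx
    rw [hux, hvx, real_inner_eq_re_inner, RCLike.inner_apply]
    simp [mul_comm]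
  have := real_inner_mul_inner_self_le (hf.toLp f) (hg.toLp g)
  simpa only [inner_eq, ← sq] using this

theorem memLp_two_sqrt {g : α → ℝ} (hg : Integrable g μ) (hg0 : 0 ≤ᵐ[μ] g) :
    MemLp (fun x => √(g x)) 2 μ := by
  refine (memLp_two_iff_integrable_sq
    (Real.continuous_sqrt.comp_aestronglyMeasurable hg.aestronglyMeasurable)).2 ?_
  refine hg.congr ?_
  filter_upwards [hg0] with x hx
  exact (Real.sq_sqrt hx).symm

variable [IsFiniteMeasure μ]

theorem sq_average_le_average_sq {f : α → ℝ} (hf : MemLp f 2 μ) :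
    (⨍ x, f x ∂μ) ^ 2 ≤ ⨍ x, f x ^ 2 ∂μ := by
  have h := sq_integral_mul_le_integral_sq_mul_integral_sq hf (memLp_const (1 : ℝ))
  simp only [mul_one, one_pow, integral_const, smul_eq_mul] at h
  rw [average_eq, average_eq, smul_eq_mul, smul_eq_mul, mul_pow]
  rcases eq_or_lt_of_le (measureReal_nonneg (μ := μ) (s := univ)) with h0 | h0
  · simp [← h0]
  · calc _ ≤ (μ.real univ)⁻¹ ^ 2 * ((∫ x, f x ^ 2 ∂μ) * μ.real univ) := by gcongr
      _ = _ := by field_simp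

theorem one_le_average_mul_average_inv [NeZero μ] {g : α → ℝ} (hg : Integrable g μ)
    (hg' : Integrable (fun x => (g x)⁻¹) μ) (hg0 : ∀ᵐ x ∂μ, 0 < g x) :
    1 ≤ (⨍ x, g x ∂μ) * ⨍ x, (g x)⁻¹ ∂μ := by
  have hg0' : 0 ≤ᵐ[μ] g := hg0.mono fun x hx => hx.le
  have hg0'' : 0 ≤ᵐ[μ] fun x => (g x)⁻¹ := hg0.mono fun x hx => (inv_pos.2 hx).le
  have h := sq_integral_mul_le_integral_sq_mul_integral_sq (memLp_two_sqrt hg hg0')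
    (memLp_two_sqrt hg' hg0'')
  have hone : (fun x => √(g x) * √((g x)⁻¹)) =ᵐ[μ] fun _ => 1 := by
    filter_upwards [hg0] with x hx
    rw [← Real.sqrt_mul hx.le, mul_inv_cancel₀ hx.ne', Real.sqrt_one]
  have hsq : ∀ {u : α → ℝ}, 0 ≤ᵐ[μ] u → ∫ x, √(u x) ^ 2 ∂μ = ∫ x, u x ∂μ := fun hu =>
    integral_congr_ae (hu.mono fun x hx => Real.sq_sqrt hx)
  rw [integral_congr_ae hone, hsq hg0', hsq hg0''] at h
  simp only [integral_const, smul_eq_mul, mul_one] at h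
  have hμ : 0 < μ.real univ := by
    simp [measureReal_def, ENNReal.toReal_pos_iff, NeZero.ne, measure_lt_top]
  rw [average_eq, average_eq, smul_eq_mul, smul_eq_mul]
  calc (1 : ℝ) = (μ.real univ)⁻¹ ^ 2 * μ.real univ ^ 2 := by field_simp
    _ ≤ (μ.real univ)⁻¹ ^ 2 * ((∫ x, g x ∂μ) * ∫ x, (g x)⁻¹ ∂μ) := by gcongr
    _ = _ := by ring

theorem one_le_average_inv_mul_sq_average_sqrt [NeZero μ] {w : α → ℝ} (hw : Integrable w μ)
    (hw' : Integrable (fun x => (w x)⁻¹) μ) (hw0 : ∀ᵐ x ∂μ, 0 < w x) :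
    1 ≤ (⨍ x, (w x)⁻¹ ∂μ) * (⨍ x, √(w x) ∂μ) ^ 2 := by
  have hu := memLp_two_sqrt hw (hw0.mono fun x hx => hx.le)
  have hu' := memLp_two_sqrt hw' (hw0.mono fun x hx => (inv_pos.2 hx).le)
  have h1 := one_le_average_mul_average_inv (hu.integrable one_le_two)
    (g := fun x => √(w x)) (by simpa only [Real.sqrt_inv] using hu'.integrable one_le_two)
    (hw0.mono fun x hx => Real.sqrt_pos.2 hx)
  have h2 := sq_average_le_average_sq hu'
  have hsq : (fun x => √((w x)⁻¹) ^ 2) =ᵐ[μ] fun x => (w x)⁻¹ :=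
    hw0.mono fun x hx => Real.sq_sqrt (inv_pos.2 hx).le
  rw [average_congr hsq] at h2
  simp only [Real.sqrt_inv] at h1 h2
  calc (1 : ℝ) ≤ ((⨍ x, √(w x) ∂μ) * ⨍ x, (√(w x))⁻¹ ∂μ) ^ 2 := one_le_pow₀ h1
    _ = (⨍ x, (√(w x))⁻¹ ∂μ) ^ 2 * (⨍ x, √(w x) ∂μ) ^ 2 := by ring
    _ ≤ _ := by gcongr

end Averages

theorem len_pos (I : ℤ × ℤ) : 0 < len I := by
  unfold len; positivity

theorem len_leftHalf (K : ℤ × ℤ) : len (leftHalf K) = len K / 2 := by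
  simp only [len, leftHalf, neg_add, zpow_add₀ (two_ne_zero' ℝ), zpow_neg_one, div_eq_mul_inv]

theorem len_rightHalf (K : ℤ × ℤ) : len (rightHalf K) = len K / 2 := by
  simp only [len, rightHalf, neg_add, zpow_add₀ (two_ne_zero' ℝ), zpow_neg_one, div_eq_mul_inv]

theorem dyadicI_eq_Ico (I : ℤ × ℤ) : dyadicI I = Ico (I.2 * len I) ((I.2 + 1) * len I) := rfl

theorem dyadicI_nonempty (I : ℤ × ℤ) : (dyadicI I).Nonempty := by
  rw [dyadicI_eq_Ico]; exact nonempty_Ico.2 (by linarith [len_pos I])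

theorem dyadicI_leftHalf (K : ℤ × ℤ) :
    dyadicI (leftHalf K) = Ico (K.2 * len K) ((2 * K.2 + 1) * (len K / 2)) := by
  rw [dyadicI_eq_Ico, len_leftHalf]; simp only [leftHalf]; push_cast; ring_nf

theorem dyadicI_rightHalf (K : ℤ × ℤ) :
    dyadicI (rightHalf K) = Ico ((2 * K.2 + 1) * (len K / 2)) ((K.2 + 1) * len K) := by
  rw [dyadicI_eq_Ico, len_rightHalf]; simp only [rightHalf]; push_cast; ring_nf

theorem dyadicI_leftHalf_union_rightHalf (K : ℤ × ℤ) :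
    dyadicI (leftHalf K) ∪ dyadicI (rightHalf K) = dyadicI K := by
  have := len_pos K
  rw [dyadicI_leftHalf, dyadicI_rightHalf, Ico_union_Ico_eq_Ico, dyadicI_eq_Ico] <;> linarith

theorem disjoint_dyadicI_leftHalf_rightHalf (K : ℤ × ℤ) :
    Disjoint (dyadicI (leftHalf K)) (dyadicI (rightHalf K)) := by
  rw [dyadicI_leftHalf, dyadicI_rightHalf]
  exact Ico_disjoint_Ico_same

theorem le_of_dyadicI_subset {I K : ℤ × ℤ} (h : dyadicI I ⊆ dyadicI K) : K.1 ≤ I.1 := by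
  rw [dyadicI_eq_Ico, dyadicI_eq_Ico, Ico_subset_Ico_iff (by linarith [len_pos I])] at h
  have hlen : len I ≤ len K := by linarith [h.1, h.2]
  simpa [len] using (zpow_le_zpow_iff_right₀ (one_lt_two : (1 : ℝ) < 2)).1 hlen

theorem Ico_int_mul_subset_of_nonempty_inter {a c d : ℤ} {δ : ℝ} (hδ : 0 < δ)
    (h : (Ico (a * δ) ((a + 1) * δ) ∩ Ico (c * δ) (d * δ)).Nonempty) :
    Ico (a * δ) ((a + 1) * δ) ⊆ Ico (c * δ) (d * δ) := by
  obtain ⟨x, ⟨hax, hxa⟩, hcx, hxd⟩ := h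
  have had : a < d := by exact_mod_cast lt_of_mul_lt_mul_right (hax.trans_lt hxd) hδ.le
  have hca : c < a + 1 := by exact_mod_cast lt_of_mul_lt_mul_right (hcx.trans_lt hxa) hδ.le
  exact Ico_subset_Ico (by gcongr; exact_mod_cast Int.lt_add_one_iff.1 hca)
    (by gcongr; exact_mod_cast had)

theorem dyadicI_subset_of_le {I K : ℤ × ℤ} (hIK : K.1 ≤ I.1)
    (h : (dyadicI I ∩ dyadicI K).Nonempty) : dyadicI I ⊆ dyadicI K := by
  obtain ⟨n, hn⟩ := Int.eq_ofNat_of_zero_le (sub_nonneg.2 hIK)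
  have hlen : len K = 2 ^ n * len I := by
    simp only [len, show -K.1 = n + -I.1 by omega, zpow_add₀ (two_ne_zero' ℝ), zpow_natCast]
  have hK : dyadicI K =
      Ico (((K.2 * 2 ^ n : ℤ) : ℝ) * len I) (((K.2 + 1) * 2 ^ n : ℤ) * len I) := by
    rw [dyadicI_eq_Ico, hlen]; push_cast; ring_nf
  rw [hK, dyadicI_eq_Ico] at h ⊢
  exact Ico_int_mul_subset_of_nonempty_inter (len_pos I) h

theorem dyadicI_injective : Function.Injective dyadicI := by
  intro I K h
  rw [dyadicI_eq_Ico, dyadicI_eq_Ico, Ico_eq_Ico_iff (Or.inl (by linarith [len_pos I]))] at h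
  have hlen : len I = len K := by linarith [h.1, h.2]
  have h1 : I.1 = K.1 := by
    simpa [len] using zpow_right_injective₀ (by norm_num : (0 : ℝ) < 2) (by norm_num) hlen
  have h2 : I.2 = K.2 := by
    exact_mod_cast mul_right_cancel₀ (len_pos K).ne' (hlen ▸ h.1)
  exact Prod.ext h1 h2

theorem eq_or_subset_half_of_subset {I K : ℤ × ℤ} (h : dyadicI I ⊆ dyadicI K) :
    I = K ∨ dyadicI I ⊆ dyadicI (leftHalf K) ∨ dyadicI I ⊆ dyadicI (rightHalf K) := by
  obtain ⟨x, hx⟩ := dyadicI_nonempty I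
  rcases (le_of_dyadicI_subset h).eq_or_lt with hIK | hIK
  · left
    exact dyadicI_injective (h.antisymm (dyadicI_subset_of_le hIK.ge ⟨x, h hx, hx⟩))
  · right
    have hle : (leftHalf K).1 ≤ I.1 := by simp only [leftHalf]; omega
    rcases (dyadicI_leftHalf_union_rightHalf K ▸ h hx : x ∈ _ ∪ _) with hl | hr
    · exact Or.inl (dyadicI_subset_of_le hle ⟨x, hx, hl⟩)
    · exact Or.inr (dyadicI_subset_of_le hle ⟨x, hx, hr⟩)

instance (I : ℤ × ℤ) : IsFiniteMeasure (volume.restrict (dyadicI I)) := by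
  rw [dyadicI_eq_Ico]; infer_instance

theorem measureReal_dyadicI (I : ℤ × ℤ) : volume.real (dyadicI I) = len I := by
  rw [dyadicI_eq_Ico, Real.volume_real_Ico_of_le (by linarith [len_pos I])]; ring

instance (I : ℤ × ℤ) : NeZero (volume.restrict (dyadicI I)) := by
  refine ⟨fun h => (len_pos I).ne' ?_⟩
  rw [← measureReal_dyadicI, ← measureReal_restrict_apply_univ, h, measureReal_zero_apply]

theorem avg_eq_average (f : ℝ → ℝ) (I : ℤ × ℤ) :
    avg f I = ⨍ x, f x ∂(volume.restrict (dyadicI I)) := by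
  rw [average_eq, measureReal_restrict_apply_univ, measureReal_dyadicI, smul_eq_mul, avg]

theorem avg_nonneg {f : ℝ → ℝ} (hf : ∀ x, 0 ≤ f x) (I : ℤ × ℤ) : 0 ≤ avg f I :=
  mul_nonneg (inv_nonneg.2 (len_pos I).le) (integral_nonneg hf)

theorem avg_eq_avg_halves {f : ℝ → ℝ} {K : ℤ × ℤ} (hf : IntegrableOn f (dyadicI K)) :
    avg f K = (avg f (leftHalf K) + avg f (rightHalf K)) / 2 := by
  have hunion := dyadicI_leftHalf_union_rightHalf K
  rw [avg, avg, avg, len_leftHalf, len_rightHalf, ← hunion,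
    setIntegral_union (disjoint_dyadicI_leftHalf_rightHalf K) measurableSet_Ico
      (hf.mono_set (hunion ▸ subset_union_left)) (hf.mono_set (hunion ▸ subset_union_right))]
  have := (len_pos K).ne'
  field_simp

theorem sq_avg_le_avg_sq {f : ℝ → ℝ} {I : ℤ × ℤ} (hf : MemLp f 2 (volume.restrict (dyadicI I))) :
    avg f I ^ 2 ≤ avg (fun x => f x ^ 2) I := by
  simpa only [avg_eq_average] using sq_average_le_average_sq hf

theorem MeasureTheory.LocallyIntegrable.integrableOn_dyadicI {g : ℝ → ℝ} (hg : LocallyIntegrable g)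
    (I : ℤ × ℤ) : IntegrableOn g (dyadicI I) :=
  (hg.integrableOn_isCompact isCompact_Icc).mono_set Ico_subset_Icc_self

theorem avg_le_A2const_mul_sq_avg_sqrt {w : ℝ → ℝ} {I : ℤ × ℤ} (hw : ∀ x, 0 < w x)
    (hwi : IntegrableOn w (dyadicI I)) (hwi' : IntegrableOn (fun x => (w x)⁻¹) (dyadicI I))
    (hA2 : BddAbove (range fun I : ℤ × ℤ => avg w I * avg (fun x => (w x)⁻¹) I)) :
    avg w I ≤ A2const w * avg (fun x => √(w x)) I ^ 2 := by
  have h := one_le_average_inv_mul_sq_average_sqrt hwi hwi' (Filter.Eventually.of_forall hw)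
  rw [← avg_eq_average, ← avg_eq_average] at h
  calc avg w I ≤ avg w I * (avg (fun x => (w x)⁻¹) I * avg (fun x => √(w x)) I ^ 2) :=
        le_mul_of_one_le_right (avg_nonneg (fun x => (hw x).le) I) h
    _ = avg w I * avg (fun x => (w x)⁻¹) I * avg (fun x => √(w x)) I ^ 2 := by ring
    _ ≤ A2const w * avg (fun x => √(w x)) I ^ 2 := by gcongr; exact le_ciSup hA2 I

/-- The Bellman function of the Carleson embedding theorem, in the variables `F = m_K (f²)`,
`x = m_K f` and `M = |K|⁻¹ Σ_{I ∈ D(K)} λ_I`. -/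
def bellman (Q F x M : ℝ) : ℝ := 4 * Q * (F - Q * x ^ 2 / (Q + M))

theorem bellman_le {Q F x M : ℝ} (hQ : 0 ≤ Q) (hM : 0 ≤ M) : bellman Q F x M ≤ 4 * Q * F := by
  have : 0 ≤ Q * x ^ 2 / (Q + M) := by positivity
  unfold bellman; nlinarith

theorem bellman_zero_nonneg {Q F x : ℝ} (hQ : 0 ≤ Q) (hx : x ^ 2 ≤ F) : 0 ≤ bellman Q F x 0 := by
  rcases hQ.eq_or_lt with rfl | hQ
  · simp [bellman]
  · rw [bellman, add_zero, mul_div_cancel_left₀ _ hQ.ne']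
    nlinarith

theorem bellman_main_inequality {Q α M₁ M₂ F₁ F₂ x₁ x₂ : ℝ} (hQ : 0 ≤ Q) (hα : 0 ≤ α)
    (hM₁ : 0 ≤ M₁) (hM₂ : 0 ≤ M₂) (hM : α + (M₁ + M₂) / 2 ≤ Q) :
    α * ((x₁ + x₂) / 2) ^ 2 + (bellman Q F₁ x₁ M₁ + bellman Q F₂ x₂ M₂) / 2 ≤
      bellman Q ((F₁ + F₂) / 2) ((x₁ + x₂) / 2) (α + (M₁ + M₂) / 2) := by
  rcases hQ.eq_or_lt with rfl | hQ
  · obtain rfl : α = 0 := by linarith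
    simp [bellman]
  set D := Q + (M₁ + M₂) / 2 with hD_def
  have hD : 0 < D := by positivity
  have engel : 2 * ((x₁ + x₂) / 2) ^ 2 / D ≤ x₁ ^ 2 / (Q + M₁) + x₂ ^ 2 / (Q + M₂) := by
    have := Finset.sq_sum_div_le_sum_sq_div Finset.univ ![x₁, x₂] (g := ![Q + M₁, Q + M₂])
      (by intro i _; fin_cases i <;> simp <;> positivity)
    simp only [Fin.sum_univ_two, Matrix.cons_val_zero, Matrix.cons_val_one] at this
    calc 2 * ((x₁ + x₂) / 2) ^ 2 / D = (x₁ + x₂) ^ 2 / (Q + M₁ + (Q + M₂)) := by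
          rw [hD_def]; field_simp; ring
      _ ≤ _ := this
  have gain : α + 4 * Q ^ 2 / (D + α) ≤ 4 * Q ^ 2 / D := by
    rw [add_div' _ _ _ (by positivity), div_le_div_iff₀ (by positivity) hD]
    have hprod : D * (D + α) ≤ 4 * Q ^ 2 := by nlinarith
    nlinarith [mul_nonneg hα (sub_nonneg.2 hprod)]
  have h1 := mul_le_mul_of_nonneg_left engel (by positivity : (0 : ℝ) ≤ 2 * Q ^ 2)
  have h2 := mul_le_mul_of_nonneg_right gain (sq_nonneg ((x₁ + x₂) / 2))
  have hDα : Q + (α + (M₁ + M₂) / 2) = D + α := by ring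
  simp only [bellman, hDα]
  linear_combination h1 + h2

def IsCarleson (lam : ℤ × ℤ → ℝ) (Q : ℝ) : Prop :=
  ∀ (J : ℤ × ℤ) (S : Finset (ℤ × ℤ)), (∀ I ∈ S, dyadicI I ⊆ dyadicI J) →
    (len J)⁻¹ * ∑ I ∈ S, lam I ≤ Q

theorem IsCarleson.nonneg {lam : ℤ × ℤ → ℝ} {Q : ℝ} (h : IsCarleson lam Q) : 0 ≤ Q := by
  simpa using h 0 ∅ (by simp)

theorem inv_len_mul_sum_eq_split (K : ℤ × ℤ) (S : Finset (ℤ × ℤ)) (p : ℤ × ℤ → Prop)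
    [DecidablePred p] (g : ℤ × ℤ → ℝ) :
    (len K)⁻¹ * ∑ I ∈ S, g I = (len K)⁻¹ * ∑ I ∈ S.filter (· = K), g I +
      ((len (leftHalf K))⁻¹ * ∑ I ∈ (S.filter (· ≠ K)).filter p, g I +
        (len (rightHalf K))⁻¹ * ∑ I ∈ (S.filter (· ≠ K)).filter (¬p ·), g I) / 2 := by
  rw [← Finset.sum_filter_add_sum_filter_not S (· = K),
    ← Finset.sum_filter_add_sum_filter_not (S.filter (· ≠ K)) p, len_leftHalf, len_rightHalf]
  have := (len_pos K).ne'
  field_simp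

section CarlesonEmbedding

variable {lam : ℤ × ℤ → ℝ} (hlam : ∀ I, 0 ≤ lam I)
include hlam

theorem inv_len_mul_sum_nonneg (K : ℤ × ℤ) (S : Finset (ℤ × ℤ)) :
    0 ≤ (len K)⁻¹ * ∑ I ∈ S, lam I :=
  mul_nonneg (inv_nonneg.2 (len_pos K).le) (Finset.sum_nonneg fun I _ => hlam I)

variable {f : ℝ → ℝ} (hf : ∀ I, MemLp f 2 (volume.restrict (dyadicI I)))
  {Q : ℝ} (hcarl : IsCarleson lam Q)
include hf hcarl

theorem inv_len_mul_sum_le_bellman (N : ℕ) (K : ℤ × ℤ) (S : Finset (ℤ × ℤ))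
    (hS : ∀ I ∈ S, dyadicI I ⊆ dyadicI K) (hdepth : ∀ I ∈ S, I.1 < K.1 + N) :
    (len K)⁻¹ * ∑ I ∈ S, lam I * avg f I ^ 2 ≤
      bellman Q (avg (fun x => f x ^ 2) K) (avg f K) ((len K)⁻¹ * ∑ I ∈ S, lam I) := by
  induction N generalizing K S with
  | zero =>
    obtain rfl : S = ∅ := Finset.eq_empty_of_forall_notMem fun I hI =>
      (hdepth I hI).not_ge (by simpa using le_of_dyadicI_subset (hS I hI))
    simpa using bellman_zero_nonneg hcarl.nonneg (sq_avg_le_avg_sq (hf K))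
  | succ N ih =>
    classical
    set inLeft := fun I => dyadicI I ⊆ dyadicI (leftHalf K)
    set S' := S.filter (· ≠ K)
    have hS' : ∀ I ∈ S', I ∈ S ∧ I ≠ K := fun I hI => Finset.mem_filter.1 hI
    have hdepth' : ∀ I ∈ S', I.1 < K.1 + 1 + N := fun I hI => by
      have := hdepth I (hS' I hI).1
      push_cast at this; omega
    have ih₁ := ih (leftHalf K) (S'.filter inLeft) (fun I hI => (Finset.mem_filter.1 hI).2)
      fun I hI => hdepth' I (Finset.mem_filter.1 hI).1
    have ih₂ := ih (rightHalf K) (S'.filter (¬inLeft ·))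
      (fun I hI => by
        obtain ⟨hI', hl⟩ := Finset.mem_filter.1 hI
        exact ((eq_or_subset_half_of_subset (hS I (hS' I hI').1)).resolve_left
          (hS' I hI').2).resolve_left hl)
      fun I hI => hdepth' I (Finset.mem_filter.1 hI).1
    have hS₀ : ∑ I ∈ S.filter (· = K), lam I * avg f I ^ 2 =
        (∑ I ∈ S.filter (· = K), lam I) * avg f K ^ 2 := by
      rw [Finset.sum_mul]
      exact Finset.sum_congr rfl fun I hI => by rw [(Finset.mem_filter.1 hI).2]
    have hM := hcarl K S hS
    rw [inv_len_mul_sum_eq_split K S inLeft] at hM ⊢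
    rw [inv_len_mul_sum_eq_split K S inLeft, hS₀, avg_eq_avg_halves ((hf K).integrable one_le_two),
      avg_eq_avg_halves ((memLp_two_iff_integrable_sq (hf K).1).1 (hf K)), ← mul_assoc]
    refine le_trans ?_ (bellman_main_inequality hcarl.nonneg (inv_len_mul_sum_nonneg hlam K _)
      (inv_len_mul_sum_nonneg hlam _ _) (inv_len_mul_sum_nonneg hlam _ _) hM)
    gcongr

theorem carleson_embedding (J : ℤ × ℤ) (S : Finset (ℤ × ℤ))
    (hS : ∀ I ∈ S, dyadicI I ⊆ dyadicI J) :
    (len J)⁻¹ * ∑ I ∈ S, lam I * avg f I ^ 2 ≤ 4 * Q * avg (fun x => f x ^ 2) J := by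
  have hdepth : ∀ I ∈ S, I.1 < J.1 + (S.sup fun I => (I.1 - J.1 + 1).toNat : ℕ) := fun I hI => by
    have := Finset.le_sup (f := fun I => (I.1 - J.1 + 1).toNat) hI
    omega
  exact (inv_len_mul_sum_le_bellman hlam hf hcarl _ J S hS hdepth).trans
    (bellman_le hcarl.nonneg (inv_len_mul_sum_nonneg hlam J S))

end CarlesonEmbedding

/-- Proposition 1, inequality (4): if `w ∈ A₂^d` and `{λ_I}` is a nonnegative Carleson
sequence with constant `Q`, then `(1/|J|) Σ_{I ∈ D(J)} (m_I w) λ_I ≤ 4 Q ‖w‖_{A₂^d} m_J w`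
for every dyadic interval `J`. -/
theorem carleson_weighted_bound'
    (w : ℝ → ℝ) (hwpos : ∀ x, 0 < w x)
    (hwloc : LocallyIntegrable w volume)
    (hwinvloc : LocallyIntegrable (fun x => (w x)⁻¹) volume)
    (hA2 : BddAbove (Set.range fun I : ℤ × ℤ => avg w I * avg (fun x => (w x)⁻¹) I))
    (lam : ℤ × ℤ → ℝ) (hlam : ∀ I, 0 ≤ lam I) (Q : ℝ)
    (hQ : ∀ (J : ℤ × ℤ) (S : Finset (ℤ × ℤ)), (∀ I ∈ S, dyadicI I ⊆ dyadicI J) →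
      (len J)⁻¹ * ∑ I ∈ S, lam I ≤ Q) :
    ∀ (J : ℤ × ℤ) (S : Finset (ℤ × ℤ)), (∀ I ∈ S, dyadicI I ⊆ dyadicI J) →
      (len J)⁻¹ * ∑ I ∈ S, avg w I * lam I ≤ 4 * Q * A2const w * avg w J := by
  intro J S hS
  have hsqrt : ∀ I, MemLp (fun x => √(w x)) 2 (volume.restrict (dyadicI I)) := fun I =>
    memLp_two_sqrt (hwloc.integrableOn_dyadicI I) (.of_forall fun x => (hwpos x).le)
  have hA2_nonneg : 0 ≤ A2const w := (le_ciSup hA2 J).trans' (mul_nonneg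
    (avg_nonneg (fun x => (hwpos x).le) J) (avg_nonneg (fun x => (inv_pos.2 (hwpos x)).le) J))
  have hsq : (fun x => √(w x) ^ 2) = w := funext fun x => Real.sq_sqrt (hwpos x).le
  calc (len J)⁻¹ * ∑ I ∈ S, avg w I * lam I
      ≤ (len J)⁻¹ * ∑ I ∈ S, A2const w * avg (fun x => √(w x)) I ^ 2 * lam I :=
        mul_le_mul_of_nonneg_left (Finset.sum_le_sum fun I _ => mul_le_mul_of_nonneg_right
          (avg_le_A2const_mul_sq_avg_sqrt hwpos (hwloc.integrableOn_dyadicI I)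
            (hwinvloc.integrableOn_dyadicI I) hA2) (hlam I))
          (inv_nonneg.2 (len_pos J).le)
    _ = A2const w * ((len J)⁻¹ * ∑ I ∈ S, lam I * avg (fun x => √(w x)) I ^ 2) := by
        simp only [Finset.mul_sum]
        exact Finset.sum_congr rfl fun I _ => by ring
    _ ≤ A2const w * (4 * Q * avg (fun x => √(w x) ^ 2) J) :=
        mul_le_mul_of_nonneg_left (carleson_embedding hlam hsqrt hQ J S hS) hA2_nonneg
    _ = 4 * Q * A2const w * avg w J := by rw [hsq]; ring
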